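/- arXiv:1703.10545 — 3 statements merged into one kernel-verified Lean document; each statement's English description precedes it below -/
import Mathlib

section
/- The goodness update is 1-Lipschitz with respect to the sup norm on reliabilities: if R and R' are two reliability assignments on the ratings, with all scores in [-1,1], then for every product p, |G_R(p) − G_{R'}(p)| ≤ max_{(u,p)∈In(p)} |R(u,p) − R'(u,p)|, where G_R(p) = (β₂·b(p) + Σ_{(u,p)∈In(p)} R(u,p)·score(u,p)) / (β₁ + β₂ + |In(p)|). Here assume In(p) is nonempty and β₁, β₂ ≥ 0. -/
/-- The goodness update is 1-Lipschitz w.r.t. the sup norm on reliabilities. -/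
theorem goodness_update_lipschitz {ι : Type*} (In : Finset ι) (hne : In.Nonempty)
    (score R R' : ι → ℝ) (b β₁ β₂ : ℝ)
    (hscore : ∀ i ∈ In, score i ∈ Set.Icc (-1 : ℝ) 1)
    (hβ₁ : 0 ≤ β₁) (hβ₂ : 0 ≤ β₂) :
    |(β₂ * b + ∑ i ∈ In, R i * score i) / (β₁ + β₂ + (In.card : ℝ)) -
      (β₂ * b + ∑ i ∈ In, R' i * score i) / (β₁ + β₂ + (In.card : ℝ))|
      ≤ In.sup' hne (fun i => |R i - R' i|) := by
  set M := In.sup' hne (fun i => |R i - R' i|) with hM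
  have hMnn : 0 ≤ M := le_trans (abs_nonneg (R hne.choose - R' hne.choose)) (Finset.le_sup' (fun i => |R i - R' i|) hne.choose_spec)
  have hn : (1 : ℝ) ≤ (In.card : ℝ) := by
    exact_mod_cast Finset.card_pos.mpr hne
  have hD : 0 < β₁ + β₂ + (In.card : ℝ) := by linarith
  rw [div_sub_div_same, abs_div, abs_of_pos hD, div_le_iff₀ hD]
  have h1 : |(β₂ * b + ∑ i ∈ In, R i * score i) - (β₂ * b + ∑ i ∈ In, R' i * score i)|
      = |∑ i ∈ In, (R i - R' i) * score i| := by
    congr 1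
    rw [Finset.sum_congr rfl (fun i _ => sub_mul (R i) (R' i) (score i)),
      Finset.sum_sub_distrib]
    ring
  rw [h1]
  calc |∑ i ∈ In, (R i - R' i) * score i| ≤ ∑ i ∈ In, |(R i - R' i) * score i| :=
        Finset.abs_sum_le_sum_abs _ _
    _ ≤ ∑ i ∈ In, M := by
        apply Finset.sum_le_sum
        intro i hi
        rw [abs_mul]
        have hs : |score i| ≤ 1 := abs_le.mpr ⟨(hscore i hi).1, (hscore i hi).2⟩
        calc |R i - R' i| * |score i| ≤ |R i - R' i| * 1 := by
              exact mul_le_mul_of_nonneg_left hs (abs_nonneg _)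
          _ = |R i - R' i| := mul_one _
          _ ≤ M := Finset.le_sup' (fun i => |R i - R' i|) hi
    _ = (In.card : ℝ) * M := by rw [Finset.sum_const, nsmul_eq_mul]
    _ ≤ M * (β₁ + β₂ + (In.card : ℝ)) := by nlinarith
end

section
/- In the FairJudge iteration with all scores in [-1,1], all behavioral priors b_U(u) ∈ [0,1] and b_P(p) ∈ [-1,1], if the iteration is initialized with F^0(u) = R^0(u,p) = G^0(p) = 1 for all users, ratings, and products, then for every t ≥ 1: F^t(u) ∈ [0,1], R^t(u,p) ∈ [0,1], and G^t(p) ∈ [-1,1] for all u, (u,p), p. -/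
/-- With initialization at 1, all FairJudge iterates stay in their ranges:
fairness and reliability in [0,1], goodness in [-1,1]. -/
theorem fairjudge_iterates_in_range
    {U P ι : Type*} [DecidableEq U] [DecidableEq P]
    (E : Finset ι)
    (usr : ι → U) (prd : ι → P) (score : ι → ℝ)
    (bU : U → ℝ) (bP : P → ℝ) (α₁ α₂ β₁ β₂ : ℝ)
    (F : ℕ → U → ℝ) (G : ℕ → P → ℝ) (Rel : ℕ → ι → ℝ)
    (hscore : ∀ e ∈ E, score e ∈ Set.Icc (-1 : ℝ) 1)
    (hbU : ∀ u, bU u ∈ Set.Icc (0 : ℝ) 1)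
    (hbP : ∀ p, bP p ∈ Set.Icc (-1 : ℝ) 1)
    (hα₁ : 0 ≤ α₁) (hα₂ : 0 ≤ α₂) (hβ₁ : 0 ≤ β₁) (hβ₂ : 0 ≤ β₂)
    (hOut : ∀ u : U, (E.filter (fun e => usr e = u)).Nonempty)
    (hIn : ∀ p : P, (E.filter (fun e => prd e = p)).Nonempty)
    (hF0 : ∀ u, F 0 u = 1) (hR0 : ∀ e ∈ E, Rel 0 e = 1) (hG0 : ∀ p, G 0 p = 1)
    (hG : ∀ t : ℕ, 1 ≤ t → ∀ p : P,
      G t p = (β₂ * bP p + ∑ e ∈ E.filter (fun e' => prd e' = p), Rel (t - 1) e * score e) /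
        (β₁ + β₂ + ((E.filter (fun e' => prd e' = p)).card : ℝ)))
    (hR : ∀ t : ℕ, 1 ≤ t → ∀ e ∈ E,
      Rel t e = (1 / 2) * (F (t - 1) (usr e) + (1 - |score e - G t (prd e)| / 2)))
    (hF : ∀ t : ℕ, 1 ≤ t → ∀ u : U,
      F t u = (0.5 * α₁ + α₂ * bU u + ∑ e ∈ E.filter (fun e' => usr e' = u), Rel t e) /
        (α₁ + α₂ + ((E.filter (fun e' => usr e' = u)).card : ℝ))) :
    ∀ t : ℕ, 1 ≤ t →
      (∀ u : U, F t u ∈ Set.Icc (0 : ℝ) 1) ∧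
      (∀ e ∈ E, Rel t e ∈ Set.Icc (0 : ℝ) 1) ∧
      (∀ p : P, G t p ∈ Set.Icc (-1 : ℝ) 1) := by
  have key : ∀ t : ℕ,
      (∀ u : U, F t u ∈ Set.Icc (0 : ℝ) 1) ∧
      (∀ e ∈ E, Rel t e ∈ Set.Icc (0 : ℝ) 1) ∧
      (1 ≤ t → ∀ p : P, G t p ∈ Set.Icc (-1 : ℝ) 1) := by
    intro t
    induction t with
    | zero =>
      refine ⟨fun u => ?_, fun e he => ?_, fun h => absurd h (by norm_num)⟩
      · rw [hF0]; exact ⟨zero_le_one, le_refl 1⟩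
      · rw [hR0 e he]; exact ⟨zero_le_one, le_refl 1⟩
    | succ n ih =>
      obtain ⟨ihF, ihR, -⟩ := ih
      have ht : 1 ≤ n + 1 := Nat.le_add_left 1 n
      have hGmem : ∀ p : P, G (n + 1) p ∈ Set.Icc (-1 : ℝ) 1 := by
        intro p
        set S := E.filter (fun e' => prd e' = p) with hS
        have hcard : (1 : ℝ) ≤ (S.card : ℝ) := by
          exact_mod_cast Finset.card_pos.2 (hIn p)
        have hden : (0 : ℝ) < β₁ + β₂ + (S.card : ℝ) := by linarith
        have hnum : |β₂ * bP p + ∑ e ∈ S, Rel n e * score e| ≤ β₁ + β₂ + (S.card : ℝ) := by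
          have h1 : |β₂ * bP p| ≤ β₂ := by
            rw [abs_mul, abs_of_nonneg hβ₂]
            have habs : |bP p| ≤ 1 := abs_le.2 ⟨(hbP p).1, (hbP p).2⟩
            calc β₂ * |bP p| ≤ β₂ * 1 := mul_le_mul_of_nonneg_left habs hβ₂
              _ = β₂ := mul_one β₂
          have h2 : |∑ e ∈ S, Rel n e * score e| ≤ (S.card : ℝ) := by
            calc |∑ e ∈ S, Rel n e * score e| ≤ ∑ e ∈ S, |Rel n e * score e| :=
                  Finset.abs_sum_le_sum_abs _ _
              _ ≤ ∑ e ∈ S, 1 := by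
                  apply Finset.sum_le_sum
                  intro e heS
                  have heE : e ∈ E := (Finset.mem_filter.1 heS).1
                  have hRe := ihR e heE
                  have hs := hscore e heE
                  rw [abs_mul]
                  have h1' : |Rel n e| ≤ 1 := abs_le.2 ⟨by linarith [hRe.1], hRe.2⟩
                  have h2' : |score e| ≤ 1 := abs_le.2 ⟨hs.1, hs.2⟩
                  exact mul_le_one₀ h1' (abs_nonneg _) h2'
              _ = (S.card : ℝ) := by simp
          calc |β₂ * bP p + ∑ e ∈ S, Rel n e * score e|
              ≤ |β₂ * bP p| + |∑ e ∈ S, Rel n e * score e| := abs_add_le _ _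
            _ ≤ β₁ + β₂ + (S.card : ℝ) := by linarith
        rw [hG (n + 1) ht p]
        simp only [Nat.add_sub_cancel]
        rw [Set.mem_Icc, ← abs_le, abs_div, abs_of_pos hden]
        exact div_le_one_of_le₀ (by rw [← hS]; exact hnum) hden.le
      have hRmem : ∀ e ∈ E, Rel (n + 1) e ∈ Set.Icc (0 : ℝ) 1 := by
        intro e he
        rw [hR (n + 1) ht e he]
        simp only [Nat.add_sub_cancel]
        have hFe := ihF (usr e)
        have hs := hscore e he
        have hGe := hGmem (prd e)
        have habs : |score e - G (n + 1) (prd e)| ≤ 2 := by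
          rw [abs_le]
          exact ⟨by linarith [hs.1, hGe.2], by linarith [hs.2, hGe.1]⟩
        have habs0 : 0 ≤ |score e - G (n + 1) (prd e)| := abs_nonneg _
        exact ⟨by linarith [hFe.1], by linarith [hFe.2]⟩
      have hFmem : ∀ u : U, F (n + 1) u ∈ Set.Icc (0 : ℝ) 1 := by
        intro u
        set S := E.filter (fun e' => usr e' = u) with hS
        have hcard : (1 : ℝ) ≤ (S.card : ℝ) := by
          exact_mod_cast Finset.card_pos.2 (hOut u)
        have hden : (0 : ℝ) < α₁ + α₂ + (S.card : ℝ) := by linarith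
        have hsum0 : 0 ≤ ∑ e ∈ S, Rel (n + 1) e :=
          Finset.sum_nonneg fun e heS => (hRmem e (Finset.mem_filter.1 heS).1).1
        have hsum1 : ∑ e ∈ S, Rel (n + 1) e ≤ (S.card : ℝ) := by
          calc ∑ e ∈ S, Rel (n + 1) e ≤ ∑ e ∈ S, 1 :=
                Finset.sum_le_sum fun e heS => (hRmem e (Finset.mem_filter.1 heS).1).2
            _ = (S.card : ℝ) := by simp
        have hbu := hbU u
        have hb2 : α₂ * bU u ≤ α₂ := by
          calc α₂ * bU u ≤ α₂ * 1 := mul_le_mul_of_nonneg_left hbu.2 hα₂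
            _ = α₂ := mul_one α₂
        have hb0 : 0 ≤ α₂ * bU u := mul_nonneg hα₂ hbu.1
        rw [hF (n + 1) ht u]
        rw [← hS]
        constructor
        · apply div_nonneg _ hden.le
          norm_num
          linarith
        · rw [div_le_one hden]
          norm_num
          linarith
      exact ⟨hFmem, hRmem, fun _ => hGmem⟩
  intro t ht
  obtain ⟨hF', hR', hG'⟩ := key t
  exact ⟨hF', hR', hG' ht⟩
end

section
/- Let T be the composite FairJudge update on reliability vectors: from R, compute goodness G_R by the 1-Lipschitz goodness update, fairness F_R by the 1-Lipschitz fairness update, and new reliabilities T(R)(u,p) = (1/2)(F_R(u) + (1 − |score(u,p) − G_R(p)|/2)). If the goodness map and fairness map are each 1-Lipschitz in the sup norm, then T is (1/2 + 1/4) = 3/4-Lipschitz in the sup norm: ‖T(R) − T(R')‖_∞ ≤ (3/4)‖R − R'‖_∞. -/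
/-- Abstract composition lemma: if the goodness and fairness maps are each
1-Lipschitz in sup norm, the composite reliability update is a 3/4-contraction. -/
theorem composite_update_contraction
    {E U P : Type*} [Fintype E] [Fintype U] [Fintype P]
    (usr : E → U) (prd : E → P) (s : E → ℝ)
    (g : (E → ℝ) → (P → ℝ)) (f : (E → ℝ) → (U → ℝ))
    (hg : ∀ R R' : E → ℝ, ‖g R - g R'‖ ≤ ‖R - R'‖)
    (hf : ∀ R R' : E → ℝ, ‖f R - f R'‖ ≤ ‖R - R'‖)
    (T : (E → ℝ) → (E → ℝ))
    (hT : ∀ (R : E → ℝ) (e : E),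
      T R e = (1 / 2) * f R (usr e) + (1 / 2) * (1 - |s e - g R (prd e)| / 2)) :
    ∀ R R' : E → ℝ, ‖T R - T R'‖ ≤ (3 / 4) * ‖R - R'‖ := by
  intro R R'
  have hnn : (0:ℝ) ≤ (3 / 4) * ‖R - R'‖ := by positivity
  rw [pi_norm_le_iff_of_nonneg hnn]
  intro e
  have hfe : |f R (usr e) - f R' (usr e)| ≤ ‖R - R'‖ :=
    le_trans (norm_le_pi_norm (f R - f R') (usr e)) (hf R R')
  have hge : |g R (prd e) - g R' (prd e)| ≤ ‖R - R'‖ :=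
    le_trans (norm_le_pi_norm (g R - g R') (prd e)) (hg R R')
  have k1 : |s e - g R (prd e)| - |s e - g R' (prd e)| ≤ ‖R - R'‖ := by
    refine le_trans (le_trans (abs_sub_abs_le_abs_sub _ _) ?_) hge
    rw [show s e - g R (prd e) - (s e - g R' (prd e)) =
      -(g R (prd e) - g R' (prd e)) by ring, abs_neg]
  have k2 : |s e - g R' (prd e)| - |s e - g R (prd e)| ≤ ‖R - R'‖ := by
    refine le_trans (le_trans (abs_sub_abs_le_abs_sub _ _) ?_) hge
    rw [show s e - g R' (prd e) - (s e - g R (prd e)) =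
      g R (prd e) - g R' (prd e) by ring]
  rw [abs_le] at hfe
  simp only [Pi.sub_apply, hT, Real.norm_eq_abs]
  rw [abs_le]
  constructor <;> [linarith [hfe.1, k1]; linarith [hfe.2, k2]]
end
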